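/- arXiv:2503.16809 — 2 statements merged into one kernel-verified Lean document; each statement's English description precedes it below -/
import Mathlib

section
/- Let Z_1, ..., Z_{n+1} be exchangeable real-valued random variables and let Q̂_n denote the empirical quantile function of the first n of them. Then for any α ∈ (0,1), P(Z_{n+1} ≤ Q̂_n((1 + 1/n)α)) ≥ α. -/
open MeasureTheory

/-- Empirical `a`-quantile of `z₁,…,z_m`, valued in `EReal` (`⊤` if `⌈m·a⌉ > m`,
i.e. when no suitable value exists). -/
noncomputable def empQuantile (m : ℕ) (z : Fin m → ℝ) (a : ℝ) : EReal :=
  sInf {q : EReal | a ≤ ((Finset.univ.filter (fun i => (z i : EReal) ≤ q)).card : ℝ) / m}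

/-!
With `R_j = #{i | Z_i < Z_j}` the strict rank of `Z_j`, the event
`Z_{n+1} ≤ Q̂_n((1 + 1/n)α)` is `R_{n+1} < (n+1)α`, i.e. `R_{n+1} < k := ⌈(n+1)α⌉`.
In any list of `n + 1` reals at least `k` entries have strict rank below `k`, and by
exchangeability the events `R_j < k` all have the same probability; hence
`(n+1) P(R_{n+1} < k) ≥ k ≥ (n+1)α`.
-/

open Finset
open scoped ENNReal

section StrictRank

variable {ι α : Type*} [Fintype ι] [LinearOrder α]

def strictRank (w : ι → α) (j : ι) : ℕ := #{i | w i < w j}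

lemma strictRank_comp_perm (w : ι → α) (σ : Equiv.Perm ι) (j : ι) :
    strictRank (w ∘ σ) j = strictRank w (σ j) :=
  card_equiv σ (by simp)

lemma strictRank_last {n : ℕ} (w : Fin (n + 1) → α) :
    strictRank w (Fin.last n) = #{i : Fin n | w i.castSucc < w (Fin.last n)} := by
  rw [strictRank, card_filter, card_filter, Fin.sum_univ_castSucc]
  simp

lemma le_card_filter_strictRank_lt {k : ℕ} (hk : k ≤ Fintype.card ι) (w : ι → α) :
    k ≤ #{j | strictRank w j < k} := by
  classical
  by_contra! hT
  have hne : (univ.filter fun j => strictRank w j < k)ᶜ.Nonempty := by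
    rw [← card_pos, card_compl]
    omega
  -- a minimal entry outside the set has all smaller entries inside it
  obtain ⟨j, hj, hmin⟩ := exists_min_image _ w hne
  have hbelow : (univ.filter fun i => w i < w j) ⊆ univ.filter fun j => strictRank w j < k := by
    intro i hi
    by_contra hi'
    exact (hmin i (mem_compl.2 hi')).not_gt (mem_filter.1 hi).2
  exact mem_compl.1 hj (mem_filter.2 ⟨mem_univ j, (card_le_card hbelow).trans_lt hT⟩)

end StrictRank

lemma coe_le_empQuantile_iff (m : ℕ) (z : Fin m → ℝ) (a t : ℝ) :
    (t : EReal) ≤ empQuantile m z a ↔ (#{i | z i < t} : ℝ) / m < a := by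
  have hcount_le : ∀ q < (t : EReal), #{i | (z i : EReal) ≤ q} ≤ #{i | z i < t} :=
    fun q hq => card_le_card fun i hi => by
      simp only [mem_filter, mem_univ, true_and] at hi ⊢
      exact_mod_cast hi.trans_lt hq
  -- the largest `z i` below `t`, or `⊥` if there is none
  set q₀ : EReal := (univ.filter fun i => z i < t).sup fun i => (z i : EReal)
  have hq₀ : q₀ < t := (Finset.sup_lt_iff (EReal.bot_lt_coe t)).2 fun i hi => by
    simpa using (mem_filter.1 hi).2
  have hcount_q₀ : #{i | z i < t} ≤ #{i | (z i : EReal) ≤ q₀} :=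
    card_le_card fun i hi => mem_filter.2 ⟨mem_univ i, le_sup (f := fun i => (z i : EReal)) hi⟩
  rw [empQuantile, le_sInf_iff]
  constructor
  · intro h
    by_contra! ha
    refine (h q₀ ?_).not_gt hq₀
    exact ha.trans (div_le_div_of_nonneg_right (by exact_mod_cast hcount_q₀) m.cast_nonneg)
  · intro ha q hq
    by_contra! hlt
    refine (hq.trans ?_).not_gt ha
    exact div_le_div_of_nonneg_right (by exact_mod_cast hcount_le q hlt) m.cast_nonneg

section Exchangeable

variable {Ω ι α : Type*} [MeasurableSpace Ω] [Fintype ι]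
  [LinearOrder α] [TopologicalSpace α] [OrderClosedTopology α] [SecondCountableTopology α]
  [MeasurableSpace α] [OpensMeasurableSpace α]

lemma measurable_strictRank (j : ι) : Measurable fun v : ι → α => strictRank v j := by
  simp_rw [strictRank, card_filter]
  exact Finset.measurable_sum _ fun i _ => Measurable.ite
    (measurableSet_lt (measurable_pi_apply i) (measurable_pi_apply j)) measurable_const
    measurable_const

open Classical in
lemma natCast_mul_measure_univ_le_sum {μ : Measure Ω} {s : ι → Set Ω}
    (hs : ∀ i, MeasurableSet (s i)) {k : ℕ} (hk : ∀ ω, k ≤ #{i | ω ∈ s i}) :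
    k * μ Set.univ ≤ ∑ i, μ (s i) :=
  calc k * μ Set.univ = ∫⁻ _, (k : ℝ≥0∞) ∂μ := (lintegral_const _).symm
    _ ≤ ∫⁻ ω, ∑ i, (s i).indicator 1 ω ∂μ := lintegral_mono fun ω => by
        have hsum : ∑ i, (s i).indicator 1 ω = (#{i | ω ∈ s i} : ℝ≥0∞) := by
          simp only [Set.indicator_apply, Pi.one_apply, card_filter, Nat.cast_sum, Nat.cast_ite,
            Nat.cast_one, Nat.cast_zero]
        exact hsum ▸ Nat.cast_le.2 (hk ω)
    _ = ∑ i, μ (s i) := by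
        rw [lintegral_finsetSum _ fun i _ => measurable_one.indicator (hs i)]
        simp [lintegral_indicator_one (hs _)]

lemma measure_strictRank_lt_eq {μ : Measure Ω} {Z : ι → Ω → α} (hZ : ∀ i, Measurable (Z i))
    (hexch : ∀ σ : Equiv.Perm ι,
      Measure.map (fun ω i => Z (σ i) ω) μ = Measure.map (fun ω i => Z i ω) μ)
    (k : ℕ) (j j₀ : ι) :
    μ {ω | strictRank (fun i => Z i ω) j < k} = μ {ω | strictRank (fun i => Z i ω) j₀ < k} := by
  classical
  have hS : MeasurableSet {v : ι → α | strictRank v j₀ < k} :=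
    measurable_strictRank j₀ (Set.finite_Iio k).measurableSet
  have hswap : {ω | strictRank (fun i => Z i ω) j < k} =
      (fun ω i => Z (Equiv.swap j j₀ i) ω) ⁻¹' {v | strictRank v j₀ < k} := by
    ext ω
    have := strictRank_comp_perm (fun i => Z i ω) (Equiv.swap j j₀) j₀
    simp only [Function.comp_def, Equiv.swap_apply_right] at this
    simp only [Set.mem_ofPred_eq, Set.mem_preimage, this]
  rw [hswap, ← Measure.map_apply (measurable_pi_lambda _ fun i => hZ _) hS, hexch,
    Measure.map_apply (measurable_pi_lambda _ hZ) hS]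
  rfl

lemma natCast_le_card_mul_measure_strictRank_lt {μ : Measure Ω} [IsProbabilityMeasure μ]
    {Z : ι → Ω → α} (hZ : ∀ i, Measurable (Z i))
    (hexch : ∀ σ : Equiv.Perm ι,
      Measure.map (fun ω i => Z (σ i) ω) μ = Measure.map (fun ω i => Z i ω) μ)
    {k : ℕ} (hk : k ≤ Fintype.card ι) (j₀ : ι) :
    (k : ℝ≥0∞) ≤ Fintype.card ι * μ {ω | strictRank (fun i => Z i ω) j₀ < k} := by
  have hmeas : ∀ j, MeasurableSet {ω | strictRank (fun i => Z i ω) j < k} := fun j =>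
    (measurable_strictRank j).comp (measurable_pi_lambda _ hZ) (Set.finite_Iio k).measurableSet
  calc (k : ℝ≥0∞) = k * μ Set.univ := by simp
    _ ≤ ∑ j, μ {ω | strictRank (fun i => Z i ω) j < k} :=
        natCast_mul_measure_univ_le_sum hmeas fun ω => by
          simpa only [Set.mem_ofPred_eq] using le_card_filter_strictRank_lt hk fun i => Z i ω
    _ = Fintype.card ι * μ {ω | strictRank (fun i => Z i ω) j₀ < k} := by
        simp [measure_strictRank_lt_eq hZ hexch k _ j₀]

end Exchangeable

/-- **Quantile inflation, lower bound.** If `Z₁,…,Z_{n+1}` are exchangeable, then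
`P(Z_{n+1} ≤ Q̂_n((1 + 1/n)α)) ≥ α`, where `Q̂_n` is the empirical quantile of the
first `n` variables. -/
theorem quantile_inflation_lower {Ω : Type*} [MeasurableSpace Ω]
    (μ : Measure Ω) [IsProbabilityMeasure μ] (n : ℕ) (hn : 0 < n)
    (Z : Fin (n + 1) → Ω → ℝ) (hZ : ∀ i, Measurable (Z i))
    (hexch : ∀ σ : Equiv.Perm (Fin (n + 1)),
      Measure.map (fun ω i => Z (σ i) ω) μ = Measure.map (fun ω i => Z i ω) μ)
    (α : ℝ) (hα : α ∈ Set.Ioo (0 : ℝ) 1) :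
    ENNReal.ofReal α ≤
      μ {ω | (Z (Fin.last n) ω : EReal) ≤
        empQuantile n (fun i : Fin n => Z i.castSucc ω) ((1 + 1 / n) * α)} := by
  obtain ⟨hα0, hα1⟩ := hα
  have hn' : (0 : ℝ) < n := by exact_mod_cast hn
  set k := ⌈((n : ℝ) + 1) * α⌉₊
  have hk : k ≤ Fintype.card (Fin (n + 1)) := by
    rw [Fintype.card_fin, Nat.ceil_le]
    push_cast
    nlinarith
  have hevent : {ω | (Z (Fin.last n) ω : EReal) ≤
      empQuantile n (fun i : Fin n => Z i.castSucc ω) ((1 + 1 / n) * α)} =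
      {ω | strictRank (fun i => Z i ω) (Fin.last n) < k} := by
    ext ω
    rw [Set.mem_ofPred_eq, Set.mem_ofPred_eq, coe_le_empQuantile_iff, strictRank_last, Nat.lt_ceil,
      div_lt_iff₀ hn', show (1 + 1 / n) * α * n = ((n : ℝ) + 1) * α by field_simp]
  have hcard := natCast_le_card_mul_measure_strictRank_lt hZ hexch hk (Fin.last n)
  rw [hevent, ← ENNReal.mul_le_mul_iff_right (a := (n + 1 : ℝ≥0∞)) (by simp) (by simp)]
  calc ((n : ℝ≥0∞) + 1) * ENNReal.ofReal α = ENNReal.ofReal (((n : ℝ) + 1) * α) := by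
        rw [ENNReal.ofReal_mul (by positivity), ENNReal.ofReal_add n.cast_nonneg zero_le_one]
        simp
    _ ≤ k := by
        rw [← ENNReal.ofReal_natCast]
        exact ENNReal.ofReal_le_ofReal (Nat.le_ceil _)
    _ ≤ _ := by simpa using hcard
end

section
/- Let S_0,...,S_T ∈ {0,1} and M_0,...,M_T ∈ {0,1} be random variables on a probability space such that for each t, E[M_t · 1{S_0=s_0,...,S_T=s_T}] ≤ α · P(S_0=s_0,...,S_T=s_T) whenever s_t = 1. Then E[ (∑_{t=0}^T S_t M_t)/(max(1, ∑_{t=0}^T S_t)) ] ≤ α. -/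
/-!
Split `Ω` into the cells `{S = s}` of the selection pattern `s ∈ {0,1}^(T+1)`. On such a cell the
denominator is the constant `max 1 |s|`, where `|s| = ∑ t, s t`, so the false coverage proportion
integrates over it to
`(∑_{s t = 1} E[M_t; S = s]) / max 1 |s| ≤ |s| α P(S = s) / max 1 |s| ≤ α P(S = s)`,
and summing over the cells gives `α`.
-/

open MeasureTheory

theorem integral_eq_sum_setIntegral_preimage_singleton {Ω β E : Type*} [MeasurableSpace Ω]
    [NormedAddCommGroup E] [NormedSpace ℝ E] {μ : Measure Ω} {f : Ω → E} {g : Ω → β}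
    (F : Finset β) (hg : ∀ b ∈ F, MeasurableSet (g ⁻¹' {b})) (hgF : ∀ ω, g ω ∈ F)
    (hf : Integrable f μ) :
    ∫ ω, f ω ∂μ = ∑ b ∈ F, ∫ ω in g ⁻¹' {b}, f ω ∂μ := by
  have hcover : ⋃ b ∈ F, g ⁻¹' {b} = Set.univ := by
    rw [Finset.set_biUnion_preimage_singleton, Set.eq_univ_iff_forall]
    exact hgF
  rw [← setIntegral_univ, ← hcover]
  refine integral_biUnion_finset F hg ?_ fun b _ => hf.integrableOn
  exact fun b _ c _ hbc => Set.disjoint_singleton.2 hbc |>.preimage g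

theorem Measurable.integrable_of_mem_Icc {Ω : Type*} [MeasurableSpace Ω] {μ : Measure Ω}
    [IsFiniteMeasure μ] {f : Ω → ℝ} (hf : Measurable f) {a b : ℝ} (hab : ∀ ω, f ω ∈ Set.Icc a b) :
    Integrable f μ :=
  .of_bound hf.aestronglyMeasurable _ <| .of_forall fun ω => abs_le_max_abs_abs (hab ω).1 (hab ω).2

theorem sum_mul_div_max_one_sum_le {ι : Type*} (s : Finset ι) {w I : ι → ℝ} {c : ℝ}
    (hw : ∀ t ∈ s, w t = 0 ∨ w t = 1) (hI : ∀ t ∈ s, w t = 1 → I t ≤ c) (hc : 0 ≤ c) :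
    (∑ t ∈ s, w t * I t) / max 1 (∑ t ∈ s, w t) ≤ c := by
  have hsum : ∑ t ∈ s, w t * I t ≤ c * ∑ t ∈ s, w t := by
    rw [Finset.mul_sum]
    refine Finset.sum_le_sum fun t ht => ?_
    rcases hw t ht with h | h
    · simp [h]
    · simpa [h] using hI t ht h
  rw [div_le_iff₀ (lt_max_of_lt_left one_pos)]
  exact hsum.trans (mul_le_mul_of_nonneg_left (le_max_right _ _) hc)

section FalseCoverage

variable {Ω ι : Type*} [Fintype ι]

noncomputable def falseCoverageProportion (S M : ι → Ω → ℝ) (ω : Ω) : ℝ :=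
  (∑ t, S t ω * M t ω) / max 1 (∑ t, S t ω)

variable {S M : ι → Ω → ℝ}

theorem falseCoverageProportion_mem_Icc {ω : Ω} (hS : ∀ t, 0 ≤ S t ω)
    (hM : ∀ t, M t ω ∈ Set.Icc 0 1) : falseCoverageProportion S M ω ∈ Set.Icc 0 1 := by
  have hnum : ∑ t, S t ω * M t ω ≤ ∑ t, S t ω :=
    Finset.sum_le_sum fun t _ => mul_le_of_le_one_right (hS t) (hM t).2
  refine ⟨div_nonneg (Finset.sum_nonneg fun t _ => mul_nonneg (hS t) (hM t).1)
    (zero_le_one.trans (le_max_left _ _)), ?_⟩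
  rw [falseCoverageProportion, div_le_one (lt_max_of_lt_left one_pos)]
  exact hnum.trans (le_max_right _ _)

theorem falseCoverageProportion_of_forall_eq {ω : Ω} {s : ι → ℝ} (hω : ∀ j, S j ω = s j) :
    falseCoverageProportion S M ω = (∑ t, s t * M t ω) / max 1 (∑ t, s t) := by
  simp only [falseCoverageProportion, hω]

variable [MeasurableSpace Ω] {μ : Measure Ω}

theorem integrable_falseCoverageProportion [IsFiniteMeasure μ] (hSm : ∀ t, Measurable (S t))
    (hMm : ∀ t, Measurable (M t)) (hS : ∀ t ω, 0 ≤ S t ω) (hM : ∀ t ω, M t ω ∈ Set.Icc 0 1) :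
    Integrable (falseCoverageProportion S M) μ :=
  ((Finset.measurable_sum _ fun t _ => (hSm t).mul (hMm t)).div
    (measurable_const.max (Finset.measurable_sum _ fun t _ => hSm t))).integrable_of_mem_Icc
    fun ω => falseCoverageProportion_mem_Icc (hS · ω) (hM · ω)

theorem setIntegral_falseCoverageProportion {A : Set Ω}
    (hA : MeasurableSet A) {s : ι → ℝ} (hAs : ∀ ω ∈ A, ∀ j, S j ω = s j)
    (hM : ∀ t, Integrable (M t) μ) :
    ∫ ω in A, falseCoverageProportion S M ω ∂μ
      = (∑ t, s t * ∫ ω in A, M t ω ∂μ) / max 1 (∑ t, s t) := by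
  rw [setIntegral_congr_fun hA fun ω hω => falseCoverageProportion_of_forall_eq (hAs ω hω),
    integral_div, integral_finsetSum _ fun t _ => ((hM t).const_mul _).integrableOn]
  simp only [integral_const_mul]

theorem setIntegral_falseCoverageProportion_le {A : Set Ω} (hA : MeasurableSet A) {s : ι → ℝ}
    (hs : ∀ t, s t = 0 ∨ s t = 1) (hAs : ∀ ω ∈ A, ∀ j, S j ω = s j)
    (hM : ∀ t, Integrable (M t) μ) {α : ℝ} (hα : 0 ≤ α)
    (hcell : ∀ t, s t = 1 → ∫ ω in A, M t ω ∂μ ≤ α * μ.real A) :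
    ∫ ω in A, falseCoverageProportion S M ω ∂μ ≤ α * μ.real A := by
  rw [setIntegral_falseCoverageProportion hA hAs hM]
  exact sum_mul_div_max_one_sum_le _ (fun t _ => hs t) (fun t _ => hcell t)
    (mul_nonneg hα measureReal_nonneg)

end FalseCoverage

/-- **Abstract FCR control.** `S t` are `{0,1}`-valued selection indicators and
`M t` are `{0,1}`-valued miscoverage indicators such that
`E[M_t · 1{S = s}] ≤ α · P(S = s)` for every full selection pattern `s` with
`s t = 1`.  Then the false coverage rate
`E[(∑ S_t M_t) / max(1, ∑ S_t)]` is at most `α`. -/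
theorem abstract_FCR_control
    {Ω : Type*} [MeasurableSpace Ω] (μ : Measure Ω) [IsProbabilityMeasure μ]
    (T : ℕ) (S M : Fin (T + 1) → Ω → ℝ)
    (hSmeas : ∀ t, Measurable (S t)) (hMmeas : ∀ t, Measurable (M t))
    (hS01 : ∀ t ω, S t ω = 0 ∨ S t ω = 1) (hM01 : ∀ t ω, M t ω = 0 ∨ M t ω = 1)
    (α : ℝ) (hα : 0 ≤ α)
    (hyp : ∀ (t : Fin (T + 1)) (s : Fin (T + 1) → ℝ), s t = 1 →
      ∫ ω in {ω | ∀ j, S j ω = s j}, M t ω ∂μ ≤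
        α * (μ {ω | ∀ j, S j ω = s j}).toReal) :
    ∫ ω, (∑ t, S t ω * M t ω) / max 1 (∑ t, S t ω) ∂μ ≤ α := by
  let pattern : Ω → Fin (T + 1) → ℝ := fun ω j => S j ω
  let patterns : Finset (Fin (T + 1) → ℝ) := Fintype.piFinset fun _ => {0, 1}
  have hfiber : ∀ s, pattern ⁻¹' {s} = {ω | ∀ j, S j ω = s j} := fun s =>
    Set.ext fun ω => funext_iff
  have hfiber_meas : ∀ s, MeasurableSet (pattern ⁻¹' {s}) := fun s =>
    measurable_pi_lambda _ hSmeas (measurableSet_singleton s)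
  have hpattern : ∀ ω, pattern ω ∈ patterns := fun ω => by
    simpa [patterns, pattern] using (hS01 · ω)
  have hS : ∀ t ω, 0 ≤ S t ω := fun t ω => by rcases hS01 t ω with h | h <;> simp [h]
  have hM : ∀ t ω, M t ω ∈ Set.Icc 0 1 := fun t ω => by rcases hM01 t ω with h | h <;> simp [h]
  change ∫ ω, falseCoverageProportion S M ω ∂μ ≤ α
  calc ∫ ω, falseCoverageProportion S M ω ∂μ
      = ∑ s ∈ patterns, ∫ ω in pattern ⁻¹' {s}, falseCoverageProportion S M ω ∂μ :=
        integral_eq_sum_setIntegral_preimage_singleton patterns (fun s _ => hfiber_meas s) hpattern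
          (integrable_falseCoverageProportion hSmeas hMmeas hS hM)
    _ ≤ ∑ s ∈ patterns, α * μ.real (pattern ⁻¹' {s}) :=
        Finset.sum_le_sum fun s hs => setIntegral_falseCoverageProportion_le (hfiber_meas s)
          (by simpa using Fintype.mem_piFinset.1 hs) (fun ω hω => funext_iff.1 hω)
          (fun t => (hMmeas t).integrable_of_mem_Icc (hM t)) hα fun t ht => hfiber s ▸ hyp t s ht
    _ = α := by
        rw [← Finset.mul_sum, sum_measureReal_preimage_singleton _ fun s _ => hfiber_meas s,
          show pattern ⁻¹' patterns = Set.univ from Set.eq_univ_of_forall hpattern, probReal_univ,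
          mul_one]
end
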